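/- Let U, V be unitary on H_s ⊗ H_e, n = n_s·n_e. Then the minimum over unitary Φ on H_e of (2n)^{-1/2} ‖U − (1_s ⊗ Φ)V‖_HS equals √(1 − (1/n)‖Γ‖_Tr), where Γ = Tr_s(U V†) is the partial trace over H_s and ‖·‖_Tr is the trace norm. -/

import Mathlib

open Matrix Kronecker
open scoped ComplexOrder

/-- Hilbert–Schmidt (Frobenius) norm of a complex square matrix. -/
noncomputable def hsNorm {k : Type*} [Fintype k] (M : Matrix k k ℂ) : ℝ :=
  Real.sqrt (Matrix.trace (Mᴴ * M)).re

/-- Trace norm: trace of the positive-semidefinite square root of `Mᴴ * M`. -/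
noncomputable def traceNorm {k : Type*} [Fintype k] [DecidableEq k] (M : Matrix k k ℂ) : ℝ :=
  (Matrix.trace
    (((Matrix.posSemidef_conjTranspose_mul_self M).1.eigenvectorUnitary : Matrix k k ℂ) *
      Matrix.diagonal (((↑) : ℝ → ℂ) ∘ Real.sqrt ∘ (Matrix.posSemidef_conjTranspose_mul_self M).1.eigenvalues) *
      star ((Matrix.posSemidef_conjTranspose_mul_self M).1.eigenvectorUnitary : Matrix k k ℂ))).re

/-- Induced two-norm: the largest singular value of `M`. -/
noncomputable def twoNorm {k : Type*} [Fintype k] [DecidableEq k] (M : Matrix k k ℂ) : ℝ :=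
  ⨆ i, Real.sqrt
    ((Matrix.PosSemidef.isHermitian
      (Matrix.posSemidef_conjTranspose_mul_self M)).eigenvalues i)

/-- Partial trace over the environment factor `e`. -/
noncomputable def ptraceE {s e : Type*} [Fintype s] [Fintype e]
    (M : Matrix (s × e) (s × e) ℂ) : Matrix s s ℂ :=
  Matrix.of fun i j => ∑ ν : e, M (i, ν) (j, ν)

/-- Partial trace over the system factor `s`. -/
noncomputable def ptraceS {s e : Type*} [Fintype s] [Fintype e]
    (M : Matrix (s × e) (s × e) ℂ) : Matrix e e ℂ :=
  Matrix.of fun μ ν => ∑ i : s, M (i, μ) (i, ν)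

/-- A density matrix: positive semidefinite with unit trace. -/
def IsDensity {k : Type*} [Fintype k] (ρ : Matrix k k ℂ) : Prop :=
  ρ.PosSemidef ∧ Matrix.trace ρ = 1

/-!
Expanding the square, `‖U - (1 ⊗ Φ) V‖²_HS = 2n - 2 Re Tr(Φ† Γ)`, because
`Tr((1 ⊗ Φ†) U V†) = Tr(Φ† Tr_s(U V†))`. So minimising the distance means maximising
`Re Tr(Φ† Γ)` over unitaries `Φ`. With a polar decomposition `Γ = W |Γ|`, this is
`Re Tr(Φ† W |Γ|) ≤ Tr |Γ| = ‖Γ‖_Tr`: in an eigenbasis of `|Γ|` the trace is a combination of the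
eigenvalues with coefficients the diagonal entries of a unitary, which have modulus at most `1`.
Equality holds at `Φ = W`.
-/

open scoped MatrixOrder

section PolarDecomposition

variable {𝕜 H : Type*} [RCLike 𝕜] [NormedAddCommGroup H] [InnerProductSpace 𝕜 H]
  [FiniteDimensional 𝕜 H]

theorem LinearMap.exists_linearIsometryEquiv_apply_eq_of_norm_eq {F : Type*} [AddCommGroup F]
    [Module 𝕜 F] (T S : F →ₗ[𝕜] H) (h : ∀ v, ‖T v‖ = ‖S v‖) :
    ∃ W : H ≃ₗᵢ[𝕜] H, ∀ v, W (S v) = T v := by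
  -- `S v ↦ T v` is a well-defined isometry on the range of `S`; extend it to all of `H`.
  have hker : ker S ≤ ker T := fun v hv => by
    rw [mem_ker] at hv ⊢
    rw [← norm_eq_zero, h, hv, norm_zero]
  let L₀ : range S →ₗ[𝕜] H := (ker S).liftQ T hker ∘ₗ S.quotKerEquivRange.symm.toLinearMap
  have hL₀ : ∀ v, L₀ ⟨S v, mem_range_self S v⟩ = T v := fun v => by
    simp only [L₀, coe_comp, LinearEquiv.coe_coe, Function.comp_apply,
      quotKerEquivRange_symm_apply_image, Submodule.mkQ_apply, Submodule.liftQ_apply]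
  let L : range S →ₗᵢ[𝕜] H := ⟨L₀, by rintro ⟨_, v, rfl⟩; rw [hL₀, h]; rfl⟩
  refine ⟨L.extend.toLinearIsometryEquiv (by rfl), fun v => ?_⟩
  exact (L.extend_apply ⟨S v, mem_range_self S v⟩).trans (hL₀ v)

theorem ContinuousLinearMap.exists_mem_unitary_mul_eq_of_star_mul_self_eq [CompleteSpace H]
    {T S : H →L[𝕜] H} (h : star T * T = star S * S) :
    ∃ W ∈ unitary (H →L[𝕜] H), T = W * S := by
  have hnorm : ∀ v, ‖T v‖ = ‖S v‖ := fun v => by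
    rw [apply_norm_eq_sqrt_inner_adjoint_left, apply_norm_eq_sqrt_inner_adjoint_left,
      ← star_eq_adjoint, ← star_eq_adjoint, ← ContinuousLinearMap.mul_def, ← mul_def, h]
  obtain ⟨W, hW⟩ := LinearMap.exists_linearIsometryEquiv_apply_eq_of_norm_eq
    (T : H →ₗ[𝕜] H) S hnorm
  exact ⟨_, (Unitary.linearIsometryEquiv.symm W).2, ext fun v => (hW v).symm⟩

end PolarDecomposition

namespace Matrix

variable {𝕜 n : Type*} [RCLike 𝕜] [Fintype n] [DecidableEq n]

theorem exists_mem_unitaryGroup_mul_eq_of_conjTranspose_mul_self_eq {A B : Matrix n n 𝕜}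
    (h : Aᴴ * A = Bᴴ * B) : ∃ W ∈ unitaryGroup n 𝕜, A = W * B := by
  let e := toEuclideanCLM (n := n) (𝕜 := 𝕜)
  obtain ⟨W, hW, hAW⟩ :=
    ContinuousLinearMap.exists_mem_unitary_mul_eq_of_star_mul_self_eq (T := e A) (S := e B) <| by
      rw [← map_star, ← map_star, ← map_mul, ← map_mul, star_eq_conjTranspose,
        star_eq_conjTranspose, h]
  refine ⟨e.symm W, Unitary.map_mem _ hW, ?_⟩
  rw [← e.symm_apply_apply A, hAW, map_mul, e.symm_apply_apply]

theorem exists_mem_unitaryGroup_mul_abs (A : Matrix n n 𝕜) :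
    ∃ W ∈ unitaryGroup n 𝕜, A = W * CFC.abs A := by
  refine exists_mem_unitaryGroup_mul_eq_of_conjTranspose_mul_self_eq ?_
  rw [← star_eq_conjTranspose, ← star_eq_conjTranspose, (CFC.abs_nonneg A).isSelfAdjoint.star_eq,
    CFC.abs_mul_abs]

theorem re_trace_mul_le_re_trace {U P : Matrix n n 𝕜} (hU : U ∈ unitaryGroup n 𝕜)
    (hP : P.PosSemidef) : RCLike.re (U * P).trace ≤ RCLike.re P.trace := by
  set Q : Matrix n n 𝕜 := (hP.1.eigenvectorUnitary : Matrix n n 𝕜)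
  have hP' : P = Q * diagonal (RCLike.ofReal ∘ hP.1.eigenvalues) * star Q := by
    simpa [Unitary.conjStarAlgAut_apply] using hP.1.spectral_theorem
  have hQUQ : star Q * U * Q ∈ unitaryGroup n 𝕜 :=
    mul_mem (mul_mem (Unitary.star_mem hP.1.eigenvectorUnitary.2) hU) hP.1.eigenvectorUnitary.2
  have htr : (U * P).trace = ∑ i, (star Q * U * Q) i i * hP.1.eigenvalues i := by
    conv_lhs => rw [hP', ← mul_assoc, ← mul_assoc, trace_mul_cycle, ← mul_assoc]
    simp [trace, mul_diagonal]
  rw [htr, hP.1.trace_eq_sum_eigenvalues, map_sum, map_sum]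
  refine Finset.sum_le_sum fun i _ => ?_
  have hentry := entry_norm_bound_of_unitary hQUQ i i
  have heig := hP.eigenvalues_nonneg i
  rw [RCLike.re_mul_ofReal, RCLike.ofReal_re]
  calc _ ≤ ‖(star Q * U * Q) i i‖ * hP.1.eigenvalues i :=
        mul_le_mul_of_nonneg_right (RCLike.re_le_norm _) heig
    _ ≤ _ := mul_le_of_le_one_left heig hentry

end Matrix

section TraceNorm

variable {k : Type*} [Fintype k] [DecidableEq k]

theorem traceNorm_eq_re_trace_abs (M : Matrix k k ℂ) : traceNorm M = (CFC.abs M).trace.re := by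
  rw [CFC.abs, CFC.sqrt_eq_real_sqrt _ (star_mul_self_nonneg M), cfcₙ_eq_cfc,
    star_eq_conjTranspose, (posSemidef_conjTranspose_mul_self M).1.cfc_eq]
  rfl

theorem isGreatest_re_trace_star_mul_traceNorm (M : Matrix k k ℂ) :
    IsGreatest ((fun Φ => (star Φ * M).trace.re) '' unitaryGroup k ℂ) (traceNorm M) := by
  obtain ⟨W, hW, hM⟩ := exists_mem_unitaryGroup_mul_abs M
  rw [traceNorm_eq_re_trace_abs]
  refine ⟨⟨W, hW, ?_⟩, ?_⟩
  · dsimp only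
    conv_lhs => rw [hM, ← mul_assoc, Unitary.star_mul_self_of_mem hW, one_mul]
  · rintro _ ⟨Φ, hΦ, rfl⟩
    dsimp only
    conv_lhs => rw [hM, ← mul_assoc]
    exact re_trace_mul_le_re_trace (mul_mem (Unitary.star_mem hΦ) hW)
      (nonneg_iff_posSemidef.mp (CFC.abs_nonneg M))

end TraceNorm

section HilbertSchmidt

variable {k : Type*} [Fintype k] [DecidableEq k]

theorem re_trace_conjTranspose_sub_mul_sub {U Y : Matrix k k ℂ} (hU : U ∈ unitaryGroup k ℂ)
    (hY : Y ∈ unitaryGroup k ℂ) :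
    ((U - Y)ᴴ * (U - Y)).trace.re = 2 * Fintype.card k - 2 * (Yᴴ * U).trace.re := by
  have hUY : (Uᴴ * Y).trace.re = (Yᴴ * U).trace.re := by
    rw [← Complex.conj_re, ← Complex.star_def, ← trace_conjTranspose, conjTranspose_mul,
      conjTranspose_conjTranspose]
  rw [conjTranspose_sub, sub_mul, mul_sub, mul_sub, ← star_eq_conjTranspose,
    ← star_eq_conjTranspose, Unitary.star_mul_self_of_mem hU, Unitary.star_mul_self_of_mem hY]
  simp only [trace_sub, trace_one, Complex.sub_re, Complex.natCast_re, star_eq_conjTranspose, hUY]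
  linarith

theorem hsNorm_sub_div_sqrt_eq [Nonempty k] {U Y : Matrix k k ℂ} (hU : U ∈ unitaryGroup k ℂ)
    (hY : Y ∈ unitaryGroup k ℂ) :
    hsNorm (U - Y) / √(2 * Fintype.card k) = √(1 - (Yᴴ * U).trace.re / Fintype.card k) := by
  have hk : (0 : ℝ) < Fintype.card k := by exact_mod_cast Fintype.card_pos
  rw [hsNorm, re_trace_conjTranspose_sub_mul_sub hU hY, ← Real.sqrt_div' _ (by positivity)]
  congr 1
  field_simp

end HilbertSchmidt

theorem trace_one_kronecker_mul {s e : Type*} [Fintype s] [Fintype e] [DecidableEq s]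
    (Φ : Matrix e e ℂ) (M : Matrix (s × e) (s × e) ℂ) :
    ((1 : Matrix s s ℂ) ⊗ₖ Φ * M).trace = (Φ * ptraceS M).trace := by
  simp only [trace, diag, mul_apply, kroneckerMap_apply, one_apply, ptraceS, of_apply,
    Fintype.sum_prod_type, ite_mul, one_mul, zero_mul, Finset.sum_ite_irrel,
    Finset.sum_const_zero, Finset.sum_ite_eq, Finset.mem_univ, if_true, Finset.mul_sum]
  exact Finset.sum_comm.trans (Finset.sum_congr rfl fun _ _ => Finset.sum_comm)

/-- `min_{Φ unitary} (2n)^{-1/2} ‖U − (1⊗Φ)V‖_HS = √(1 − ‖Tr_s(UV†)‖_Tr / n)`. -/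
theorem stmt5 {s e : Type*} [Fintype s] [Fintype e] [DecidableEq s] [DecidableEq e]
    [Nonempty s] [Nonempty e]
    (U V : Matrix (s × e) (s × e) ℂ)
    (hU : U ∈ Matrix.unitaryGroup (s × e) ℂ) (hV : V ∈ Matrix.unitaryGroup (s × e) ℂ) :
    IsLeast {x : ℝ | ∃ Φ ∈ Matrix.unitaryGroup e ℂ,
        x = hsNorm (U - ((1 : Matrix s s ℂ) ⊗ₖ Φ) * V) /
          Real.sqrt (2 * (Fintype.card (s × e)))}
      (Real.sqrt (1 - traceNorm (ptraceS (U * Vᴴ)) / (Fintype.card (s × e)))) := by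
  set n : ℝ := (Fintype.card (s × e) : ℝ)
  set Γ := ptraceS (U * Vᴴ)
  have hvalue : ∀ Φ ∈ unitaryGroup e ℂ, hsNorm (U - (1 : Matrix s s ℂ) ⊗ₖ Φ * V) / √(2 * n)
      = √(1 - (star Φ * Γ).trace.re / n) := fun Φ hΦ => by
    have hX : (1 : Matrix s s ℂ) ⊗ₖ Φ ∈ unitaryGroup (s × e) ℂ :=
      kronecker_mem_unitary (one_mem _) hΦ
    rw [hsNorm_sub_div_sqrt_eq hU (mul_mem hX hV), conjTranspose_mul, conjTranspose_kronecker,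
      conjTranspose_one, mul_assoc, trace_mul_comm, mul_assoc, trace_one_kronecker_mul,
      star_eq_conjTranspose]
  have hanti : Antitone fun x : ℝ => √(1 - x / n) := fun x y hxy => by
    dsimp only
    gcongr
  have hset : {x | ∃ Φ ∈ unitaryGroup e ℂ, x = hsNorm (U - (1 : Matrix s s ℂ) ⊗ₖ Φ * V) / √(2 * n)}
      = (fun Φ => √(1 - (star Φ * Γ).trace.re / n)) '' unitaryGroup e ℂ :=
    Set.ext fun x => exists_congr fun Φ => and_congr_right fun hΦ => by rw [hvalue Φ hΦ, eq_comm]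
  rw [hset, ← Set.image_image (fun x => √(1 - x / n))]
  exact hanti.map_isGreatest (isGreatest_re_trace_star_mul_traceNorm Γ)
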